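/- arXiv:2211.12822 — 9 statements merged into one kernel-verified Lean document; each statement's English description precedes it below -/
import Mathlib

section
/- Let f be a bounded continuous section of π, fix y ∈ Y, let (t_n) be positive reals with t_n → 0, and let (y_n) ⊆ Y be a quasi-minimizing sequence, i.e. g(y_n) + d(f(y), π⁻¹(y_n))² / (2 t_n) ≤ u(y, t_n) + 1/n for all n ∈ ℕ. Then d(f(y), π⁻¹(y_n)) → 0 as n → ∞; consequently the distance between the fibers, inf{ dist(a,b) : a ∈ π⁻¹(y), b ∈ π⁻¹(y_n) }, also tends to 0. -/
/-!
Testing the infimum defining `u(y, t)` at `z = y`, where `d(f y, π⁻¹ y) = 0`, gives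
`u(y, t) ≤ g y`. Since `g` is bounded by the bound `M` of `f`, the quasi-minimality of `y_n`
forces `d(f y, π⁻¹ y_n)² / (2 t_n) ≤ 2M + 1/n`, so `d(f y, π⁻¹ y_n)² = O(t_n) → 0`.
The distance between the fibers is at most `d(f y, π⁻¹ y_n)` because `f y ∈ π⁻¹ y`.
-/

open Metric Set Filter Topology

lemma abs_iSup_apply_le_norm {ι : Type*} [Fintype ι] (x : EuclideanSpace ℝ ι) :
    |⨆ j, x j| ≤ ‖x‖ := by
  have hle : ∀ j, |x j| ≤ ‖x‖ := PiLp.norm_apply_le x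
  refine abs_le.2 ⟨?_, Real.iSup_le (fun j => (le_abs_self _).trans (hle j)) (norm_nonneg x)⟩
  rcases isEmpty_or_nonempty ι with hι | ⟨⟨j⟩⟩
  · simp
  · exact (neg_le_of_abs_le (hle j)).trans (le_ciSup (Finite.bddAbove_range _) j)

lemma sq_le_of_quasiMin {ι : Type*} {D G : ι → ℝ} {m M t ε : ℝ} (ht : 0 < t)
    (hG : ∀ j, m ≤ G j) {i₀ i : ι} (hD₀ : D i₀ = 0) (hGi₀ : G i₀ ≤ M)
    (hi : G i + D i ^ 2 / (2 * t) ≤ (⨅ j, D j ^ 2 / (2 * t) + G j) + ε) :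
    D i ^ 2 ≤ 2 * t * (M - m + ε) := by
  have hbdd : BddBelow (range fun j => D j ^ 2 / (2 * t) + G j) :=
    ⟨m, forall_mem_range.2 fun j => le_add_of_nonneg_of_le (by positivity) (hG j)⟩
  have hinf : (⨅ j, D j ^ 2 / (2 * t) + G j) ≤ M :=
    (ciInf_le hbdd i₀).trans (by simpa [hD₀] using hGi₀)
  have hquot : D i ^ 2 / (2 * t) ≤ M - m + ε := by linarith [hG i]
  rwa [div_le_iff₀' (by positivity)] at hquot

lemma tendsto_zero_of_sq_le_const_mul {α : Type*} {l : Filter α} {d t : α → ℝ} {C : ℝ}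
    (hd : ∀ a, 0 ≤ d a) (hdt : ∀ a, d a ^ 2 ≤ C * t a) (ht : Tendsto t l (𝓝 0)) :
    Tendsto d l (𝓝 0) := by
  have hsq : Tendsto (fun a => d a ^ 2) l (𝓝 0) :=
    squeeze_zero (fun a => sq_nonneg _) hdt (by simpa using ht.const_mul C)
  simpa [Real.sqrt_sq (hd _)] using hsq.sqrt

lemma sInf_dist_le_infDist {E : Type*} [PseudoMetricSpace E] {A B : Set E} {x : E}
    (hx : x ∈ A) (hB : B.Nonempty) :
    sInf {r : ℝ | ∃ a ∈ A, ∃ b ∈ B, r = dist a b} ≤ infDist x B := by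
  have : Nonempty B := hB.to_subtype
  rw [infDist_eq_iInf]
  refine le_ciInf fun b => csInf_le ⟨0, ?_⟩ ⟨x, hx, b, b.2, rfl⟩
  rintro r ⟨a, -, b, -, rfl⟩
  exact dist_nonneg

theorem stmt_2_general
    (κ : ℕ)
    (Y : Set (EuclideanSpace ℝ (Fin κ)))
    (π : EuclideanSpace ℝ (Fin κ) → Y)
    (hπsurj : Function.Surjective π)
    (f : Y → EuclideanSpace ℝ (Fin κ))
    (hsec : ∀ y : Y, π (f y) = y)
    (hfbd : Bornology.IsBounded (Set.range f))
    (g : Y → ℝ) (hg : ∀ y : Y, g y = ⨆ j : Fin κ, f y j)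
    (u : Y → ℝ → ℝ)
    (hu : ∀ (y : Y) (t : ℝ), u y t =
      ⨅ z : Y, (Metric.infDist (f y) {x | π x = z}) ^ 2 / (2 * t) + g z)
    (y : Y) (t : ℕ → ℝ) (ht : ∀ n, 0 < t n)
    (htlim : Tendsto t atTop (nhds 0))
    (yseq : ℕ → Y)
    (hquasi : ∀ n : ℕ,
      g (yseq n) + (Metric.infDist (f y) {x | π x = yseq n}) ^ 2 / (2 * t n)
        ≤ u y (t n) + 1 / (n : ℝ)) :
    Tendsto (fun n => Metric.infDist (f y) {x | π x = yseq n}) atTop (nhds 0)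
    ∧
    Tendsto (fun n =>
      sInf { r : ℝ | ∃ a ∈ {x | π x = y}, ∃ b ∈ {x | π x = yseq n}, r = dist a b })
      atTop (nhds 0) := by
  obtain ⟨M, hM⟩ := isBounded_iff_forall_norm_le.1 hfbd
  have hgM : ∀ z, |g z| ≤ M := fun z =>
    (hg z ▸ abs_iSup_apply_le_norm (f z)).trans (hM _ ⟨z, rfl⟩)
  have hsq : ∀ n, infDist (f y) {x | π x = yseq n} ^ 2 ≤ 2 * (M + M + 1) * t n := by
    intro n
    have hbound := sq_le_of_quasiMin (D := fun z => infDist (f y) {x | π x = z}) (ht n)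
      (fun z => neg_le_of_abs_le (hgM z)) (infDist_zero_of_mem (hsec y)) (le_of_abs_le (hgM y))
      (hu y (t n) ▸ hquasi n)
    have hn : 1 / (n : ℝ) ≤ 1 := (one_div (n : ℝ)).trans_le (Nat.cast_inv_le_one n)
    nlinarith [ht n]
  have hdist := tendsto_zero_of_sq_le_const_mul (fun n => infDist_nonneg) hsq htlim
  refine ⟨hdist, squeeze_zero (fun n => Real.sInf_nonneg ?_) (fun n => ?_) hdist⟩
  · rintro r ⟨a, -, b, -, rfl⟩
    exact dist_nonneg
  · exact sInf_dist_le_infDist (hsec y) (hπsurj (yseq n))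

/-- quasi-minimizing sequences for `u(y, t_n)` with `t_n → 0`
satisfy `d(f(y), π⁻¹(y_n)) → 0`, and consequently the distance between the
fibers `π⁻¹(y)` and `π⁻¹(y_n)` tends to `0`. -/
theorem stmt_2
    (κ : ℕ) (hκ : 1 ≤ κ)
    (Y : Set (EuclideanSpace ℝ (Fin κ))) (hYne : Y.Nonempty)
    (hYbd : Bornology.IsBounded Y)
    (π : EuclideanSpace ℝ (Fin κ) → Y)
    (hπsurj : Function.Surjective π)
    (f : Y → EuclideanSpace ℝ (Fin κ))
    (hsec : ∀ y : Y, π (f y) = y)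
    (hfcont : Continuous f)
    (hfbd : Bornology.IsBounded (Set.range f))
    (g : Y → ℝ) (hg : ∀ y : Y, g y = ⨆ j : Fin κ, f y j)
    (u : Y → ℝ → ℝ)
    (hu : ∀ (y : Y) (t : ℝ), u y t =
      ⨅ z : Y, (Metric.infDist (f y) {x | π x = z}) ^ 2 / (2 * t) + g z)
    (y : Y) (t : ℕ → ℝ) (ht : ∀ n, 0 < t n)
    (htlim : Tendsto t atTop (nhds 0))
    (yseq : ℕ → Y)
    (hquasi : ∀ n : ℕ,
      g (yseq n) + (Metric.infDist (f y) {x | π x = yseq n}) ^ 2 / (2 * t n)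
        ≤ u y (t n) + 1 / (n : ℝ)) :
    Tendsto (fun n => Metric.infDist (f y) {x | π x = yseq n}) atTop (nhds 0)
    ∧
    Tendsto (fun n =>
      sInf { r : ℝ | ∃ a ∈ {x | π x = y}, ∃ b ∈ {x | π x = yseq n}, r = dist a b })
      atTop (nhds 0) :=
  stmt_2_general κ Y π hπsurj f hsec hfbd g hg u hu y t ht htlim yseq hquasi
end

section
/- Assume L ≥ 0, that for all a, b, z ∈ Y and r > 0 one has r·L( d(f(b), π⁻¹(z))/r ) − r·L( d(f(a), π⁻¹(z))/r ) ≤ 2K·√( L( dist(f(a), f(b))/r ) ), and that t·L(a/t) ≤ s·L(a/s) for all a ≥ 0 and 0 < s < t. Assume for every (w,r) ∈ Y × (0,∞) the infimum defining u_L(w,r) is attained. Then for all x, y ∈ Y and 0 < s < t: u_L(y,t) ≤ 2K·√( L( dist(f(y), f(x))/s ) ) + u_L(x,s). -/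
open Metric Set

/-- space-time comparison estimate for the intrinsic Hopf–Lax
semigroup with Lagrangian `L`. -/
theorem stmt_4
    (κ : ℕ) (hκ : 1 ≤ κ)
    (Y : Set (EuclideanSpace ℝ (Fin κ))) (hYne : Y.Nonempty)
    (hYbd : Bornology.IsBounded Y)
    (π : EuclideanSpace ℝ (Fin κ) → Y)
    (hπsurj : Function.Surjective π)
    (f : Y → EuclideanSpace ℝ (Fin κ))
    (hsec : ∀ y : Y, π (f y) = y)
    (hfcont : Continuous f)
    (g : Y → ℝ) (hg : ∀ y : Y, g y = ⨆ j : Fin κ, f y j)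
    (K : ℝ) (hK : 0 ≤ K)
    (hKbd : ∀ a b : Y, Metric.infDist (f a) {x | π x = b} ≤ K)
    (L : ℝ → ℝ)
    (hLnonneg : ∀ x : ℝ, 0 ≤ L x)
    (hLprop : ∀ (a b z : Y) (r : ℝ), 0 < r →
      r * L (Metric.infDist (f b) {x | π x = z} / r)
        - r * L (Metric.infDist (f a) {x | π x = z} / r)
      ≤ 2 * K * Real.sqrt (L (dist (f a) (f b) / r)))
    (hLmono : ∀ (a : ℝ), 0 ≤ a → ∀ (s t : ℝ), 0 < s → s < t →
      t * L (a / t) ≤ s * L (a / s))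
    (uL : Y → ℝ → ℝ)
    (huL : ∀ (y : Y) (r : ℝ), uL y r =
      ⨅ z : Y, r * L (Metric.infDist (f y) {x | π x = z} / r) + g z)
    (hattain : ∀ (w : Y) (r : ℝ), 0 < r → ∃ z : Y,
      uL w r = r * L (Metric.infDist (f w) {x | π x = z} / r) + g z)
    (x y : Y) (s t : ℝ) (hs : 0 < s) (hst : s < t) :
    uL y t ≤ 2 * K * Real.sqrt (L (dist (f y) (f x) / s)) + uL x s := by
  haveI : Nonempty Y := hYne.to_subtype
  have ht : 0 < t := hs.trans hst
  -- uniform bound on the Lagrangian term, from hLmono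
  have hbound : ∀ (w z : Y) (r : ℝ), 0 < r →
      r * L (Metric.infDist (f w) {x | π x = z} / r)
        ≤ r * L 0 + (K / (K / r + 1)) * L (K / r + 1) := by
    intro w z r hr
    set a := Metric.infDist (f w) {x | π x = z} with ha
    have h0 : 0 ≤ a := Metric.infDist_nonneg
    have hK' : a ≤ K := hKbd w z
    have hx0 : 0 < K / r + 1 := by positivity
    have hsecond : 0 ≤ (K / (K / r + 1)) * L (K / r + 1) := by
      have := hLnonneg (K / r + 1)
      positivity
    rcases eq_or_lt_of_le h0 with h | h
    · rw [← h, zero_div]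
      linarith
    · have hlt : a / (K / r + 1) < r := by
        rw [div_lt_iff₀ hx0]
        have hKr : K / r * r = K := by field_simp
        nlinarith
      have hs' : 0 < a / (K / r + 1) := div_pos h hx0
      have hmono := hLmono a h0 (a / (K / r + 1)) r hs' hlt
      have harg : a / (a / (K / r + 1)) = K / r + 1 := by
        field_simp
      rw [harg] at hmono
      have hcmp : (a / (K / r + 1)) * L (K / r + 1)
          ≤ (K / (K / r + 1)) * L (K / r + 1) := by
        apply mul_le_mul_of_nonneg_right _ (hLnonneg _)
        gcongr
      have hrl0 : 0 ≤ r * L 0 := mul_nonneg hr.le (hLnonneg 0)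
      linarith
  -- BddBelow transfer: from range of the Hopf-Lax integrand to range of g
  have hgF : ∀ (w : Y) (r : ℝ), 0 < r →
      BddBelow (Set.range fun z : Y =>
        r * L (Metric.infDist (f w) {x | π x = z} / r) + g z) →
      BddBelow (Set.range g) := by
    rintro w r hr ⟨m, hm⟩
    refine ⟨m - (r * L 0 + (K / (K / r + 1)) * L (K / r + 1)), ?_⟩
    rintro v ⟨z, rfl⟩
    have h1 := hm (Set.mem_range_self (f := fun z : Y =>
      r * L (Metric.infDist (f w) {x | π x = z} / r) + g z) z)
    have h2 := hbound w z r hr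
    linarith
  -- BddBelow transfer: from range of g to range of the integrand
  have hFg : ∀ (w : Y) (r : ℝ), 0 ≤ r →
      BddBelow (Set.range g) →
      BddBelow (Set.range fun z : Y =>
        r * L (Metric.infDist (f w) {x | π x = z} / r) + g z) := by
    rintro w r hr ⟨m, hm⟩
    refine ⟨m, ?_⟩
    rintro v ⟨z, rfl⟩
    have h1 := hm (Set.mem_range_self (f := g) z)
    have h2 : 0 ≤ r * L (Metric.infDist (f w) {x | π x = z} / r) :=
      mul_nonneg hr (hLnonneg _)
    simp only
    linarith
  obtain ⟨z, hz⟩ := hattain x s hs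
  by_cases hB : BddBelow (Set.range fun z : Y =>
      t * L (Metric.infDist (f y) {x | π x = z} / t) + g z)
  · have key : uL y t ≤ t * L (Metric.infDist (f y) {x | π x = z} / t) + g z := by
      rw [huL y t]
      exact ciInf_le hB z
    have h2 := hLmono (Metric.infDist (f y) {x | π x = z})
      Metric.infDist_nonneg s t hs hst
    have h3 := hLprop x y z s hs
    rw [dist_comm (f y) (f x), hz]
    linarith
  · have h1 : uL y t = 0 := by
      rw [huL y t]
      exact Real.iInf_of_not_bddBelow hB
    have hgnb : ¬ BddBelow (Set.range g) := fun h => hB (hFg y t ht.le h)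
    have hxnb : ¬ BddBelow (Set.range fun z : Y =>
        s * L (Metric.infDist (f x) {x | π x = z} / s) + g z) :=
      fun h => hgnb (hgF x s hs h)
    have h2 : uL x s = 0 := by
      rw [huL x s]
      exact Real.iInf_of_not_bddBelow hxnb
    rw [h1, h2]
    have : 0 ≤ 2 * K * Real.sqrt (L (dist (f y) (f x) / s)) := by positivity
    linarith
end

section
/- Let Λ ≥ 1 and assume g(x) − g(z) ≤ Λ · d(f(x), π⁻¹(z)) for all x, z ∈ Y (this holds in particular when f is an intrinsically Lipschitz section of π with constant Λ). Then for all x ∈ Y and t > 0: |u(x,t) − g(x)| ≤ (Λ²/2)·t. In particular u(x,t) → g(x) as t → 0⁺, i.e. u = g on Y × {t = 0}. -/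
open Metric Set Filter

/-- if `g(x) - g(z) ≤ Λ·d(f(x), π⁻¹(z))` (as holds for
intrinsically Lipschitz sections), then `|u(x,t) - g(x)| ≤ (Λ²/2)·t`, and in
particular `u(x,t) → g(x)` as `t → 0⁺`. -/
theorem stmt_5
    (κ : ℕ) (hκ : 1 ≤ κ)
    (Y : Set (EuclideanSpace ℝ (Fin κ))) (hYne : Y.Nonempty)
    (hYbd : Bornology.IsBounded Y)
    (π : EuclideanSpace ℝ (Fin κ) → Y)
    (hπsurj : Function.Surjective π)
    (f : Y → EuclideanSpace ℝ (Fin κ))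
    (hsec : ∀ y : Y, π (f y) = y)
    (hfcont : Continuous f)
    (g : Y → ℝ) (hg : ∀ y : Y, g y = ⨆ j : Fin κ, f y j)
    (u : Y → ℝ → ℝ)
    (hu : ∀ (y : Y) (t : ℝ), u y t =
      ⨅ z : Y, (Metric.infDist (f y) {x | π x = z}) ^ 2 / (2 * t) + g z)
    (Λ : ℝ) (hΛ : 1 ≤ Λ)
    (hLip : ∀ x z : Y, g x - g z ≤ Λ * Metric.infDist (f x) {p | π p = z}) :
    (∀ (x : Y) (t : ℝ), 0 < t → |u x t - g x| ≤ Λ ^ 2 / 2 * t) ∧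
    (∀ x : Y, Tendsto (fun t => u x t) (nhdsWithin 0 (Set.Ioi 0)) (nhds (g x))) := by
  have key : ∀ (x : Y) (t : ℝ), 0 < t → |u x t - g x| ≤ Λ ^ 2 / 2 * t := by
    intro x t ht
    have hlb : ∀ z : Y,
        g x - Λ ^ 2 / 2 * t ≤ (Metric.infDist (f x) {p | π p = z}) ^ 2 / (2 * t) + g z := by
      intro z
      set d := Metric.infDist (f x) {p | π p = z} with hd
      have hd0 : 0 ≤ d := Metric.infDist_nonneg
      have h1 := hLip x z
      have h2 : 0 ≤ (d - Λ * t) ^ 2 := sq_nonneg _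
      rw [div_add' _ _ _ (by positivity), le_div_iff₀ (by positivity)]
      nlinarith
    have hbdd : BddBelow (Set.range fun z : Y =>
        (Metric.infDist (f x) {p | π p = z}) ^ 2 / (2 * t) + g z) := by
      refine ⟨g x - Λ ^ 2 / 2 * t, ?_⟩
      rintro _ ⟨z, rfl⟩
      exact hlb z
    have hub : u x t ≤ g x := by
      rw [hu]
      have : (Metric.infDist (f x) {p | π p = x}) ^ 2 / (2 * t) + g x = g x := by
        have : Metric.infDist (f x) {p | π p = x} = 0 := by
          apply Metric.infDist_zero_of_mem
          exact hsec x
        rw [this]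
        simp
      calc (⨅ z : Y, (Metric.infDist (f x) {p | π p = z}) ^ 2 / (2 * t) + g z)
          ≤ (Metric.infDist (f x) {p | π p = x}) ^ 2 / (2 * t) + g x := ciInf_le hbdd x
        _ = g x := this
    have hlo : g x - Λ ^ 2 / 2 * t ≤ u x t := by
      rw [hu]
      haveI : Nonempty Y := hYne.to_subtype
      exact le_ciInf hlb
    have ht' : 0 ≤ Λ ^ 2 / 2 * t := by positivity
    rw [abs_le]
    constructor <;> linarith
  refine ⟨key, fun x => ?_⟩
  have h0 : Tendsto (fun t : ℝ => g x + Λ ^ 2 / 2 * t) (nhdsWithin 0 (Set.Ioi 0)) (nhds (g x)) := by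
    have : Tendsto (fun t : ℝ => g x + Λ ^ 2 / 2 * t) (nhds 0) (nhds (g x + Λ ^ 2 / 2 * 0)) := by
      exact ((continuous_const.add (continuous_const.mul continuous_id)).tendsto 0)
    simpa using this.mono_left nhdsWithin_le_nhds
  have h1 : Tendsto (fun t : ℝ => g x - Λ ^ 2 / 2 * t) (nhdsWithin 0 (Set.Ioi 0)) (nhds (g x)) := by
    have : Tendsto (fun t : ℝ => g x - Λ ^ 2 / 2 * t) (nhds 0) (nhds (g x - Λ ^ 2 / 2 * 0)) := by
      exact ((continuous_const.sub (continuous_const.mul continuous_id)).tendsto 0)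
    simpa using this.mono_left nhdsWithin_le_nhds
  refine tendsto_of_tendsto_of_tendsto_of_le_of_le' h1 h0 ?_ ?_
  · filter_upwards [self_mem_nhdsWithin] with t ht
    have := key x t ht
    rw [abs_le] at this
    linarith [this.1]
  · filter_upwards [self_mem_nhdsWithin] with t ht
    have := key x t ht
    rw [abs_le] at this
    linarith [this.2]
end

section
/- Let f be a bounded continuous section of π, y ∈ Y and 0 < t < s. Suppose y_t ∈ Y attains the infimum defining u(y,t) and y_s ∈ Y attains the infimum defining u(y,s). Then d(f(y), π⁻¹(y_t)) ≤ d(f(y), π⁻¹(y_s)). -/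
open Metric Set

/-- monotonicity of the distance of minimizers: if `y_t` and `y_s`
attain the infima defining `u(y,t)` and `u(y,s)` with `0 < t < s`, then
`d(f(y), π⁻¹(y_t)) ≤ d(f(y), π⁻¹(y_s))`. -/
theorem stmt_9
    (κ : ℕ) (hκ : 1 ≤ κ)
    (Y : Set (EuclideanSpace ℝ (Fin κ))) (hYne : Y.Nonempty)
    (hYbd : Bornology.IsBounded Y)
    (π : EuclideanSpace ℝ (Fin κ) → Y)
    (hπsurj : Function.Surjective π)
    (f : Y → EuclideanSpace ℝ (Fin κ))
    (hsec : ∀ y : Y, π (f y) = y)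
    (hfcont : Continuous f)
    (hfbd : Bornology.IsBounded (Set.range f))
    (g : Y → ℝ) (hg : ∀ y : Y, g y = ⨆ j : Fin κ, f y j)
    (u : Y → ℝ → ℝ)
    (hu : ∀ (y : Y) (r : ℝ), u y r =
      ⨅ z : Y, (Metric.infDist (f y) {x | π x = z}) ^ 2 / (2 * r) + g z)
    (y : Y) (t s : ℝ) (ht : 0 < t) (hts : t < s)
    (yt ys : Y)
    (hyt : u y t = (Metric.infDist (f y) {x | π x = yt}) ^ 2 / (2 * t) + g yt)
    (hys : u y s = (Metric.infDist (f y) {x | π x = ys}) ^ 2 / (2 * s) + g ys) :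
    Metric.infDist (f y) {x | π x = yt} ≤ Metric.infDist (f y) {x | π x = ys} := by
  haveI : Nonempty (Fin κ) := Fin.pos_iff_nonempty.mp hκ
  obtain ⟨C, hC⟩ := hfbd.exists_norm_le
  -- g bounded below
  have hgbd : ∀ z : Y, -C ≤ g z := by
    intro z
    rw [hg]
    have h0 : -C ≤ f z ⟨0, hκ⟩ := by
      have h1 : |f z ⟨0, hκ⟩| ≤ ‖f z‖ := by
        rw [EuclideanSpace.norm_eq]
        have hle : |f z ⟨0, hκ⟩| ^ 2 ≤ ∑ i : Fin κ, ‖f z i‖ ^ 2 := by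
          calc |f z ⟨0, hκ⟩| ^ 2 = ‖f z ⟨0, hκ⟩‖ ^ 2 := by rw [Real.norm_eq_abs]
          _ ≤ ∑ i : Fin κ, ‖f z i‖ ^ 2 := Finset.single_le_sum
            (fun j _ => sq_nonneg ‖f z j‖) (Finset.mem_univ _)
        calc |f z ⟨0, hκ⟩| = Real.sqrt (|f z ⟨0, hκ⟩| ^ 2) :=
            (Real.sqrt_sq (abs_nonneg _)).symm
        _ ≤ Real.sqrt (∑ i : Fin κ, ‖f z i‖ ^ 2) := Real.sqrt_le_sqrt hle
      have h2 : ‖f z‖ ≤ C := hC _ ⟨z, rfl⟩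
      cases abs_le.mp (h1.trans h2) with
      | intro h _ => exact h
    refine h0.trans (le_ciSup ?_ _)
    exact (Set.finite_range _).bddAbove
  have key : ∀ r : ℝ, 0 < r → ∀ w : Y,
      u y r = (Metric.infDist (f y) {x | π x = w}) ^ 2 / (2 * r) + g w →
      ∀ z : Y, (Metric.infDist (f y) {x | π x = w}) ^ 2 / (2 * r) + g w ≤
        (Metric.infDist (f y) {x | π x = z}) ^ 2 / (2 * r) + g z := by
    intro r hr w hw z
    rw [← hw, hu]
    refine ciInf_le ⟨-C, ?_⟩ z
    rintro _ ⟨v, rfl⟩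
    have : (0:ℝ) ≤ (Metric.infDist (f y) {x | π x = v}) ^ 2 / (2 * r) :=
      div_nonneg (sq_nonneg _) (by linarith)
    linarith [hgbd v]
  have h1 := key t ht yt hyt ys
  have h2 := key s (ht.trans hts) ys hys yt
  set a := Metric.infDist (f y) {x | π x = yt}
  set b := Metric.infDist (f y) {x | π x = ys}
  have ha : 0 ≤ a := Metric.infDist_nonneg
  have hb : 0 ≤ b := Metric.infDist_nonneg
  have hsq : a^2 ≤ b^2 := by
    have hd : (a^2 - b^2) / (2*t) ≤ (a^2 - b^2) / (2*s) := by
      rw [sub_div, sub_div]; linarith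
    by_contra hcon
    push_neg at hcon
    have hpos : 0 < a^2 - b^2 := by linarith
    have := div_lt_div_of_pos_left hpos (by linarith : (0:ℝ) < 2*t) (by linarith : 2*t < 2*s)
    linarith
  nlinarith [sq_nonneg (a - b), sq_nonneg (a + b)]
end

section
/- Let f be a bounded continuous section of π and let K ≥ 0 satisfy d(f(a), π⁻¹(b)) ≤ K for all a, b ∈ Y. Then for every y ∈ Y and all 0 < s < t: 0 ≤ u(y,s) − u(y,t) ≤ (K²/2)·(1/s − 1/t). In particular, on any interval [τ₁, τ₂] ⊂ (0,∞) the map t ↦ u(y,t) is Lipschitz with constant K²/(2τ₁²). -/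
open Metric Set

/-- quantitative monotonicity and Lipschitz continuity in time of
the intrinsic Hopf–Lax function `u`. -/
theorem stmt_10
    (κ : ℕ) (hκ : 1 ≤ κ)
    (Y : Set (EuclideanSpace ℝ (Fin κ))) (hYne : Y.Nonempty)
    (hYbd : Bornology.IsBounded Y)
    (π : EuclideanSpace ℝ (Fin κ) → Y)
    (hπsurj : Function.Surjective π)
    (f : Y → EuclideanSpace ℝ (Fin κ))
    (hsec : ∀ y : Y, π (f y) = y)
    (hfcont : Continuous f)
    (hfbd : Bornology.IsBounded (Set.range f))
    (K : ℝ) (hK : 0 ≤ K)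
    (hKbd : ∀ a b : Y, Metric.infDist (f a) {x | π x = b} ≤ K)
    (g : Y → ℝ) (hg : ∀ y : Y, g y = ⨆ j : Fin κ, f y j)
    (u : Y → ℝ → ℝ)
    (hu : ∀ (y : Y) (r : ℝ), u y r =
      ⨅ z : Y, (Metric.infDist (f y) {x | π x = z}) ^ 2 / (2 * r) + g z)
    (y : Y) :
    (∀ s t : ℝ, 0 < s → s < t →
      0 ≤ u y s - u y t ∧ u y s - u y t ≤ K ^ 2 / 2 * (1 / s - 1 / t)) ∧
    (∀ τ₁ τ₂ : ℝ, 0 < τ₁ → ∀ a b : ℝ, a ∈ Set.Icc τ₁ τ₂ → b ∈ Set.Icc τ₁ τ₂ →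
      |u y a - u y b| ≤ K ^ 2 / (2 * τ₁ ^ 2) * |a - b|) := by
  haveI : Nonempty (Fin κ) := ⟨⟨0, hκ⟩⟩
  haveI : Nonempty Y := hYne.to_subtype
  -- bound on g from below
  obtain ⟨R, hR⟩ : ∃ R, ∀ z : Y, ‖f z‖ ≤ R := by
    obtain ⟨R, hR⟩ := hfbd.subset_closedBall 0
    exact ⟨R, fun z => by simpa using hR ⟨z, rfl⟩⟩
  have hcoord : ∀ (x : EuclideanSpace ℝ (Fin κ)) (j : Fin κ), |x j| ≤ ‖x‖ := by
    intro x j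
    rw [EuclideanSpace.norm_eq, ← Real.sqrt_sq_eq_abs]
    apply Real.sqrt_le_sqrt
    have := Finset.single_le_sum (f := fun i => ‖x i‖ ^ 2)
      (fun i _ => sq_nonneg _) (Finset.mem_univ j)
    simpa [Real.norm_eq_abs, sq_abs] using this
  have hglb : ∀ z : Y, -R ≤ g z := by
    intro z
    rw [hg]
    refine le_trans ?_ (le_ciSup (Set.Finite.bddAbove (Set.finite_range _)) (⟨0, hκ⟩ : Fin κ))
    have := hcoord (f z) ⟨0, hκ⟩
    have := hR z
    cases abs_le.mp (hcoord (f z) ⟨0, hκ⟩) with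
    | intro h1 h2 => linarith
  set h : Y → ℝ := fun z => Metric.infDist (f y) {x | π x = z} with hh
  have hh0 : ∀ z, 0 ≤ h z := fun z => Metric.infDist_nonneg
  have hhK : ∀ z, h z ≤ K := fun z => hKbd y z
  have hbdd : ∀ r : ℝ, 0 < r →
      BddBelow (Set.range fun z : Y => h z ^ 2 / (2 * r) + g z) := by
    intro r hr
    refine ⟨-R, fun x hx => ?_⟩
    obtain ⟨z, rfl⟩ := hx
    have : 0 ≤ h z ^ 2 / (2 * r) := by positivity
    linarith [hglb z]
  -- main monotone estimate
  have main : ∀ s t : ℝ, 0 < s → s < t →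
      0 ≤ u y s - u y t ∧ u y s - u y t ≤ K ^ 2 / 2 * (1 / s - 1 / t) := by
    intro s t hs hst
    have ht : 0 < t := hs.trans hst
    rw [hu, hu]
    constructor
    · rw [sub_nonneg]
      refine le_ciInf fun z => ?_
      refine le_trans (ciInf_le (hbdd t ht) z) ?_
      have : h z ^ 2 / (2 * t) ≤ h z ^ 2 / (2 * s) := by
        apply div_le_div_of_nonneg_left (sq_nonneg _) (by linarith) (by linarith)
      linarith
    · rw [sub_le_iff_le_add]
      show (⨅ z : Y, h z ^ 2 / (2 * s) + g z) ≤
        K ^ 2 / 2 * (1 / s - 1 / t) + ⨅ z : Y, h z ^ 2 / (2 * t) + g z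
      rw [add_comm]
      have : (⨅ z : Y, h z ^ 2 / (2 * t) + g z) + K ^ 2 / 2 * (1 / s - 1 / t)
          = ⨅ z : Y, (h z ^ 2 / (2 * t) + g z + K ^ 2 / 2 * (1 / s - 1 / t)) := by
        rw [← ciInf_add (hbdd t ht)]
      rw [this]
      refine le_ciInf fun z => ?_
      refine le_trans (ciInf_le (hbdd s hs) z) ?_
      have h1 : h z ^ 2 ≤ K ^ 2 := by nlinarith [hh0 z, hhK z]
      have h2 : 1 / t ≤ 1 / s := by
        apply one_div_le_one_div_of_le hs (le_of_lt hst)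
      have key : h z ^ 2 / (2 * s) ≤ h z ^ 2 / (2 * t) + K ^ 2 / 2 * (1 / s - 1 / t) := by
        have e : h z ^ 2 / (2 * s) = h z ^ 2 / (2 * t) + h z ^ 2 / 2 * (1 / s - 1 / t) := by
          field_simp
          ring
        rw [e]
        nlinarith [sq_nonneg (h z)]
      linarith
  refine ⟨main, ?_⟩
  intro τ₁ τ₂ hτ₁ a b ha hb
  have key : ∀ a b : ℝ, a ∈ Set.Icc τ₁ τ₂ → b ∈ Set.Icc τ₁ τ₂ → a < b →
      u y a - u y b ≤ K ^ 2 / (2 * τ₁ ^ 2) * |a - b| := by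
    intro a b ha hb hab
    have haa : 0 < a := lt_of_lt_of_le hτ₁ ha.1
    have hbb : 0 < b := lt_of_lt_of_le hτ₁ hb.1
    obtain ⟨-, h2⟩ := main a b haa hab
    refine h2.trans ?_
    rw [abs_of_nonpos (by linarith)]
    have e : 1 / a - 1 / b = (b - a) / (a * b) := by field_simp
    rw [e]
    have hab2 : τ₁ ^ 2 ≤ a * b := by nlinarith [ha.1, hb.1]
    have : (b - a) / (a * b) ≤ (b - a) / τ₁ ^ 2 := by
      apply div_le_div_of_nonneg_left (by linarith) (by positivity) hab2
    calc K ^ 2 / 2 * ((b - a) / (a * b)) ≤ K ^ 2 / 2 * ((b - a) / τ₁ ^ 2) := by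
          apply mul_le_mul_of_nonneg_left this (by positivity)
      _ = K ^ 2 / (2 * τ₁ ^ 2) * -(a - b) := by ring
  rcases lt_trichotomy a b with hlt | heq | hgt
  · rw [abs_of_nonneg (main a b (lt_of_lt_of_le hτ₁ ha.1) hlt).1]
    exact key a b ha hb hlt
  · simp [heq]
  · rw [abs_of_nonpos (by
      have := (main b a (lt_of_lt_of_le hτ₁ hb.1) hgt).1; linarith)]
    have := key b a hb ha hgt
    rw [abs_sub_comm] at this
    linarith
end

section
/- Let f be a bounded continuous section of π, y ∈ Y and 0 < t < s. Suppose y_t ∈ Y attains the infimum defining u(y,t) and y_s ∈ Y attains the infimum defining u(y,s); write d_t := d(f(y), π⁻¹(y_t)) and d_s := d(f(y), π⁻¹(y_s)). Then (d_s²/2)·(1/s − 1/t) ≤ u(y,s) − u(y,t) ≤ (d_t²/2)·(1/s − 1/t). -/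
open Metric Set

/-- two-sided estimate of the time increment of `u` in terms of
the distances realized by minimizers. -/
theorem stmt_11
    (κ : ℕ) (hκ : 1 ≤ κ)
    (Y : Set (EuclideanSpace ℝ (Fin κ))) (hYne : Y.Nonempty)
    (hYbd : Bornology.IsBounded Y)
    (π : EuclideanSpace ℝ (Fin κ) → Y)
    (hπsurj : Function.Surjective π)
    (f : Y → EuclideanSpace ℝ (Fin κ))
    (hsec : ∀ y : Y, π (f y) = y)
    (hfcont : Continuous f)
    (hfbd : Bornology.IsBounded (Set.range f))
    (g : Y → ℝ) (hg : ∀ y : Y, g y = ⨆ j : Fin κ, f y j)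
    (u : Y → ℝ → ℝ)
    (hu : ∀ (y : Y) (r : ℝ), u y r =
      ⨅ z : Y, (Metric.infDist (f y) {x | π x = z}) ^ 2 / (2 * r) + g z)
    (y : Y) (t s : ℝ) (ht : 0 < t) (hts : t < s)
    (yt ys : Y)
    (hyt : u y t = (Metric.infDist (f y) {x | π x = yt}) ^ 2 / (2 * t) + g yt)
    (hys : u y s = (Metric.infDist (f y) {x | π x = ys}) ^ 2 / (2 * s) + g ys) :
    (Metric.infDist (f y) {x | π x = ys}) ^ 2 / 2 * (1 / s - 1 / t)
      ≤ u y s - u y t ∧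
    u y s - u y t
      ≤ (Metric.infDist (f y) {x | π x = yt}) ^ 2 / 2 * (1 / s - 1 / t) := by
  have hs : 0 < s := ht.trans hts
  have hκ' : Nonempty (Fin κ) := ⟨⟨0, hκ⟩⟩
  -- f is bounded in norm
  obtain ⟨M, hM⟩ := hfbd.subset_closedBall 0
  have hgM : ∀ z : Y, -M ≤ g z := by
    intro z
    have h1 : ‖f z‖ ≤ M := by
      simpa using mem_closedBall_zero_iff.1 (hM ⟨z, rfl⟩)
    have h2 : -M ≤ f z ⟨0, hκ⟩ := by
      have habs : |f z ⟨0, hκ⟩| ≤ ‖f z‖ := by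
        rw [EuclideanSpace.norm_eq]
        have he : |f z ⟨0, hκ⟩| = Real.sqrt (‖f z ⟨0, hκ⟩‖ ^ 2) := by
          rw [Real.sqrt_sq_eq_abs]; simp
        rw [he]
        apply Real.sqrt_le_sqrt
        exact Finset.single_le_sum (f := fun i => ‖f z i‖ ^ 2)
          (fun i _ => by positivity) (Finset.mem_univ _)
      have := (abs_le.1 (habs.trans h1)).1
      linarith
    calc -M ≤ f z ⟨0, hκ⟩ := h2
      _ ≤ g z := by
        rw [hg]
        exact le_ciSup (Set.Finite.bddAbove (Set.finite_range _)) _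
  have key : ∀ r : ℝ, 0 < r → ∀ z : Y,
      u y r ≤ (Metric.infDist (f y) {x | π x = z}) ^ 2 / (2 * r) + g z := by
    intro r hr z
    rw [hu]
    have : Nonempty Y := hYne.to_subtype
    apply ciInf_le
    refine ⟨-M, ?_⟩
    rintro _ ⟨w, rfl⟩
    have : (0:ℝ) ≤ (Metric.infDist (f y) {x | π x = w}) ^ 2 / (2 * r) := by positivity
    linarith [hgM w]
  set dt := Metric.infDist (f y) {x | π x = yt}
  set ds := Metric.infDist (f y) {x | π x = ys}
  have h1 : u y s ≤ dt ^ 2 / (2 * s) + g yt := key s hs yt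
  have h2 : u y t ≤ ds ^ 2 / (2 * t) + g ys := key t ht ys
  constructor
  · rw [hys]
    have : ds ^ 2 / 2 * (1 / s - 1 / t) = ds ^ 2 / (2 * s) - ds ^ 2 / (2 * t) := by
      field_simp
    linarith
  · rw [hyt]
    have : dt ^ 2 / 2 * (1 / s - 1 / t) = dt ^ 2 / (2 * s) - dt ^ 2 / (2 * t) := by
      field_simp
    linarith
end

section
/- Let f be a bounded continuous section of π, y ∈ Y, t > 0, and suppose w ∈ Y attains the infimum defining u(y,t). Then for every z ∈ Y: u(z,t) − u(y,t) ≤ ( dist(f(y), f(z)) / (2t) ) · ( d(f(y), π⁻¹(w)) + d(f(z), π⁻¹(w)) ). -/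
open Metric Set

lemma coord_abs_le_norm {κ : ℕ} (x : EuclideanSpace ℝ (Fin κ)) (j : Fin κ) :
    |x j| ≤ ‖x‖ := by
  rw [EuclideanSpace.norm_eq]
  have h1 : |x j| = Real.sqrt (‖x j‖ ^ 2) := by
    rw [Real.sqrt_sq_eq_abs]; simp [abs_abs]
  rw [h1]
  apply Real.sqrt_le_sqrt
  exact Finset.single_le_sum (f := fun i => ‖x i‖ ^ 2)
    (fun i _ => by positivity) (Finset.mem_univ j)

/-- spatial increment estimate for `u` in terms of a minimizer
`w` of `u(y,t)`. -/
theorem stmt_12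
    (κ : ℕ) (hκ : 1 ≤ κ)
    (Y : Set (EuclideanSpace ℝ (Fin κ))) (hYne : Y.Nonempty)
    (hYbd : Bornology.IsBounded Y)
    (π : EuclideanSpace ℝ (Fin κ) → Y)
    (hπsurj : Function.Surjective π)
    (f : Y → EuclideanSpace ℝ (Fin κ))
    (hsec : ∀ y : Y, π (f y) = y)
    (hfcont : Continuous f)
    (hfbd : Bornology.IsBounded (Set.range f))
    (g : Y → ℝ) (hg : ∀ y : Y, g y = ⨆ j : Fin κ, f y j)
    (u : Y → ℝ → ℝ)
    (hu : ∀ (y : Y) (r : ℝ), u y r =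
      ⨅ z : Y, (Metric.infDist (f y) {x | π x = z}) ^ 2 / (2 * r) + g z)
    (y : Y) (t : ℝ) (ht : 0 < t)
    (w : Y)
    (hw : u y t = (Metric.infDist (f y) {x | π x = w}) ^ 2 / (2 * t) + g w) :
    ∀ z : Y, u z t - u y t ≤
      dist (f y) (f z) / (2 * t) *
        (Metric.infDist (f y) {x | π x = w} +
          Metric.infDist (f z) {x | π x = w}) := by
  intro z
  -- bound on norms of f
  obtain ⟨C, hC⟩ := hfbd.exists_norm_le
  have hCnorm : ∀ v : Y, ‖f v‖ ≤ C := fun v => hC (f v) ⟨v, rfl⟩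
  have hglb : ∀ v : Y, -C ≤ g v := by
    intro v
    have h0 : (-C : ℝ) ≤ f v ⟨0, hκ⟩ := by
      have := coord_abs_le_norm (f v) ⟨0, hκ⟩
      have := hCnorm v
      cases abs_le.mp (le_trans (coord_abs_le_norm (f v) ⟨0, hκ⟩) (hCnorm v)) with
      | intro h1 h2 => linarith
    rw [hg]
    exact le_trans h0 (le_ciSup (f := fun j => f v j) (Finite.bddAbove_range _) ⟨0, hκ⟩)
  -- the infimum is bounded below
  have hbdd : BddBelow (Set.range fun z' : Y =>
      (Metric.infDist (f z) {x | π x = z'}) ^ 2 / (2 * t) + g z') := by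
    refine ⟨-C, ?_⟩
    rintro r ⟨z', rfl⟩
    have h1 : 0 ≤ (Metric.infDist (f z) {x | π x = z'}) ^ 2 / (2 * t) := by positivity
    have := hglb z'
    simp only
    linarith
  have huz : u z t ≤ (Metric.infDist (f z) {x | π x = w}) ^ 2 / (2 * t) + g w := by
    rw [hu]
    exact ciInf_le hbdd w
  set A : Set (EuclideanSpace ℝ (Fin κ)) := {x | π x = w} with hA
  obtain ⟨x0, hx0⟩ := hπsurj w
  have hAne : A.Nonempty := ⟨x0, hx0⟩
  set a := Metric.infDist (f y) A with ha
  set b := Metric.infDist (f z) A with hb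
  have ha0 : 0 ≤ a := Metric.infDist_nonneg
  have hb0 : 0 ≤ b := Metric.infDist_nonneg
  have hlip : b ≤ a + dist (f z) (f y) := Metric.infDist_le_infDist_add_dist
  have hdist : dist (f z) (f y) = dist (f y) (f z) := dist_comm _ _
  have key : u z t - u y t ≤ (b ^ 2 - a ^ 2) / (2 * t) := by
    have hring : (b ^ 2 - a ^ 2) / (2 * t) = b ^ 2 / (2 * t) - a ^ 2 / (2 * t) := by ring
    rw [hw]; linarith [huz]
  refine le_trans key ?_
  rw [div_mul_eq_mul_div, div_le_div_iff_of_pos_right (by linarith : (0:ℝ) < 2 * t)]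
  nlinarith [dist_nonneg (x := f y) (y := f z)]
end

section
/- Let f be an intrinsically Lipschitz section of π with constant Λ ≥ 1, let y ∈ Y and t > 0, and let z ∈ Y satisfy g(z) + d(f(y), π⁻¹(z))² / (2t) ≤ g(y). Then d(f(y), π⁻¹(z)) ≤ 2tΛ. -/
open Metric Set

/-- for an intrinsically Lipschitz section `f` with constant
`Λ ≥ 1`, if `g(z) + d(f(y), π⁻¹(z))²/(2t) ≤ g(y)` then
`d(f(y), π⁻¹(z)) ≤ 2tΛ`. -/
theorem stmt_13
    (κ : ℕ) (hκ : 1 ≤ κ)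
    (Y : Set (EuclideanSpace ℝ (Fin κ))) (hYne : Y.Nonempty)
    (hYbd : Bornology.IsBounded Y)
    (π : EuclideanSpace ℝ (Fin κ) → Y)
    (hπsurj : Function.Surjective π)
    (f : Y → EuclideanSpace ℝ (Fin κ))
    (hsec : ∀ y : Y, π (f y) = y)
    (hfcont : Continuous f)
    (g : Y → ℝ) (hg : ∀ y : Y, g y = ⨆ j : Fin κ, f y j)
    (Λ : ℝ) (hΛ : 1 ≤ Λ)
    (hLip : ∀ y₁ y₂ : Y, dist (f y₁) (f y₂) ≤ Λ * Metric.infDist (f y₁) {x | π x = y₂})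
    (y : Y) (t : ℝ) (ht : 0 < t)
    (z : Y)
    (hz : g z + (Metric.infDist (f y) {x | π x = z}) ^ 2 / (2 * t) ≤ g y) :
    Metric.infDist (f y) {x | π x = z} ≤ 2 * t * Λ := by

  set D := Metric.infDist (f y) {x | π x = z} with hD
  have hD0 : 0 ≤ D := Metric.infDist_nonneg
  rcases eq_or_lt_of_le hD0 with h0 | h0
  · rw [← h0]; positivity
  have hne : Nonempty (Fin κ) := Fin.pos_iff_nonempty.mp hκ
  -- coordinate bound
  have hcoord : ∀ j : Fin κ, f y j ≤ f z j + dist (f y) (f z) := by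
    intro j
    have h1 : dist (f y j) (f z j) ≤ dist (f y) (f z) := by
      rw [EuclideanSpace.dist_eq]
      have := Real.sqrt_le_sqrt (Finset.single_le_sum
        (f := fun i => dist (f y i) (f z i) ^ 2)
        (fun i _ => by positivity) (Finset.mem_univ j))
      calc dist (f y j) (f z j) = Real.sqrt (dist (f y j) (f z j) ^ 2) := by
            rw [Real.sqrt_sq dist_nonneg]
        _ ≤ _ := this
    rw [Real.dist_eq] at h1
    have := le_of_abs_le h1
    linarith [abs_sub_abs_le_abs_sub (f y j) (f z j)]
  have hgdiff : g y - g z ≤ dist (f y) (f z) := by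
    rw [hg y, hg z]
    have hbdd : BddAbove (Set.range fun j : Fin κ => (f z : EuclideanSpace ℝ (Fin κ)) j) :=
      Set.Finite.bddAbove (Set.finite_range _)
    have h1 : (⨆ j : Fin κ, f y j) ≤ (⨆ j : Fin κ, f z j) + dist (f y) (f z) := by
      apply ciSup_le
      intro j
      exact le_trans (hcoord j) (by gcongr; exact le_ciSup hbdd j)
    linarith
  have hLz := hLip y z
  have key : D ^ 2 / (2 * t) ≤ Λ * D := le_trans (by linarith) (le_trans hgdiff hLz)
  have h2t : 0 < 2 * t := by linarith
  have : D ^ 2 ≤ Λ * D * (2 * t) := by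
    rw [div_le_iff₀ h2t] at key; exact key
  have : D * D ≤ (2 * t * Λ) * D := by nlinarith
  exact le_of_mul_le_mul_right (by nlinarith) h0
end

section
/- There exist a metric space X, a topological space Y, a continuous open surjective map π : X → Y, a continuous section f : Y → X of π (i.e. π ∘ f = id_Y), and points x, y, z ∈ Y such that d(f(x), π⁻¹(y)) − d(f(x), π⁻¹(z)) > dist(f(y), f(z)). Hence, in contrast with the inequality d(f(y), π⁻¹(x)) − d(f(z), π⁻¹(x)) ≤ dist(f(y), f(z)) valid for all sections, the 'symmetrized' intrinsic distance increment is not controlled by dist(f(y), f(z)). -/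
open Metric Set

noncomputable def pt (t : ℝ) : EuclideanSpace ℝ (Fin 2) :=
  (WithLp.equiv 2 (Fin 2 → ℝ)).symm ![t, 0]

lemma pt_inj : Function.Injective pt := by
  intro s t h
  have := congrArg (fun v => (WithLp.equiv 2 (Fin 2 → ℝ)) v 0) h
  simpa [pt] using this

lemma pt_dist (s t : ℝ) : dist (pt s) (pt t) = |s - t| := by
  rw [EuclideanSpace.dist_eq]
  simp [pt, Fin.sum_univ_two, Real.dist_eq, sq_abs, Real.sqrt_sq_eq_abs]

lemma pt_ne {s t : ℝ} (h : s ≠ t) : pt s ≠ pt t := fun he => h (pt_inj he)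

/-- there exist a metric space `X`, a topological space `Y`
(here realized as subspaces of the Euclidean plane), a continuous open
surjective map `π : X → Y`, a continuous section `f` of `π`, and points
`x, y, z ∈ Y` with `d(f(x), π⁻¹(y)) − d(f(x), π⁻¹(z)) > dist(f(y), f(z))`:
the symmetrized intrinsic increment is not controlled by `dist (f y) (f z)`. -/
theorem stmt_14 :
    ∃ (X Y : Set (EuclideanSpace ℝ (Fin 2)))
      (π : X → Y) (f : Y → X) (x y z : Y),
      Continuous π ∧ IsOpenMap π ∧ Function.Surjective π ∧
      Continuous f ∧ (∀ w : Y, π (f w) = w) ∧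
      dist (f y) (f z) <
        Metric.infDist (f x) (π ⁻¹' {y}) - Metric.infDist (f x) (π ⁻¹' {z}) := by
  classical
  set X : Set (EuclideanSpace ℝ (Fin 2)) := {pt 0, pt 10, pt 11, pt 1} with hX
  set Y : Set (EuclideanSpace ℝ (Fin 2)) := {pt 0, pt 1, pt 2} with hY
  have hP : pt 0 ∈ Y := by simp [hY]
  have hQ : pt 1 ∈ Y := by simp [hY]
  have hR : pt 2 ∈ Y := by simp [hY]
  have hA : pt 0 ∈ X := by simp [hX]
  have hB : pt 10 ∈ X := by simp [hX]
  have hC : pt 11 ∈ X := by simp [hX]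
  have hC' : pt 1 ∈ X := by simp [hX]
  set π : X → Y := fun w =>
    if w.val = pt 0 then ⟨pt 0, hP⟩ else if w.val = pt 10 then ⟨pt 1, hQ⟩ else ⟨pt 2, hR⟩
    with hπ
  set f : Y → X := fun w =>
    if w.val = pt 0 then ⟨pt 0, hA⟩ else if w.val = pt 1 then ⟨pt 10, hB⟩ else ⟨pt 11, hC⟩
    with hf
  haveI : Finite X := by rw [hX]; infer_instance
  haveI : Finite Y := by rw [hY]; infer_instance
  have n1 : pt (1:ℝ) ≠ pt 0 := pt_ne (by norm_num)
  have n2 : pt (2:ℝ) ≠ pt 0 := pt_ne (by norm_num)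
  have n3 : pt (2:ℝ) ≠ pt 1 := pt_ne (by norm_num)
  have n4 : pt (10:ℝ) ≠ pt 0 := pt_ne (by norm_num)
  have n5 : pt (11:ℝ) ≠ pt 0 := pt_ne (by norm_num)
  have n6 : pt (11:ℝ) ≠ pt 10 := pt_ne (by norm_num)
  have n7 : pt (1:ℝ) ≠ pt 10 := pt_ne (by norm_num)
  have n8 : pt (0:ℝ) ≠ pt 10 := pt_ne (by norm_num)
  have n9 : pt (0:ℝ) ≠ pt 1 := pt_ne (by norm_num)
  refine ⟨X, Y, π, f, ⟨pt 0, hP⟩, ⟨pt 1, hQ⟩, ⟨pt 2, hR⟩, continuous_of_discreteTopology,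
    fun s _ => isOpen_discrete _, ?_, continuous_of_discreteTopology, ?_, ?_⟩
  · -- surjectivity
    rintro ⟨v, hv⟩
    simp only [hY, mem_insert_iff, mem_singleton_iff] at hv
    rcases hv with h | h | h <;> subst h
    · exact ⟨⟨pt 0, hA⟩, by simp [hπ]⟩
    · exact ⟨⟨pt 10, hB⟩, by simp [hπ, n4]⟩
    · exact ⟨⟨pt 11, hC⟩, by simp [hπ, n5, n6]⟩
  · -- section
    rintro ⟨v, hv⟩
    simp only [hY, mem_insert_iff, mem_singleton_iff] at hv
    rcases hv with h | h | h <;> subst h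
    · simp [hπ, hf]
    · simp [hπ, hf, n1, n4]
    · simp [hπ, hf, n2, n3, n5, n6]
  · -- the inequality
    have hfx : f ⟨pt 0, hP⟩ = ⟨pt 0, hA⟩ := by simp [hf]
    have hfy : f ⟨pt 1, hQ⟩ = ⟨pt 10, hB⟩ := by simp [hf, n1]
    have hfz : f ⟨pt 2, hR⟩ = ⟨pt 11, hC⟩ := by simp [hf, n2, n3]
    have hd : dist (f ⟨pt 1, hQ⟩) (f ⟨pt 2, hR⟩) = 1 := by
      rw [hfy, hfz, Subtype.dist_eq]
      simp only [pt_dist]; norm_num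
    rw [hd, hfx]
    have hset : π ⁻¹' {(⟨pt 1, hQ⟩ : Y)} = {(⟨pt 10, hB⟩ : X)} := by
      ext ⟨v, hv⟩
      simp only [hX, mem_insert_iff, mem_singleton_iff] at hv
      rcases hv with h | h | h | h <;> subst h <;>
        simp [hπ, Subtype.ext_iff, n4, n5, n6, n7, n8, n9,
          pt_ne (show (0:ℝ) ≠ 2 by norm_num), pt_ne (show (2:ℝ) ≠ 1 by norm_num),
          pt_ne (show (1:ℝ) ≠ 0 by norm_num)]
    have h1 : Metric.infDist (⟨pt 0, hA⟩ : X) (π ⁻¹' {(⟨pt 1, hQ⟩ : Y)}) = 10 := by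
      rw [hset, infDist_singleton, Subtype.dist_eq, pt_dist]; norm_num
    have hmem2 : (⟨pt 1, hC'⟩ : X) ∈ π ⁻¹' {(⟨pt 2, hR⟩ : Y)} := by
      simp [hπ, n1, n7]
    have h2 : Metric.infDist (⟨pt 0, hA⟩ : X) (π ⁻¹' {(⟨pt 2, hR⟩ : Y)}) ≤ 1 := by
      refine le_trans (infDist_le_dist_of_mem hmem2) ?_
      rw [Subtype.dist_eq, pt_dist]; norm_num
    rw [h1]
    linarith
end
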